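/- Let S = {z \in \C : |Re z| < \pi/2} and for \lambda \ge 0 define g_\lambda on S by g_\lambda(x+iy) = 1/2 - (1/\pi) arctan(sinh(\lambda+2-y)/cos x). Then g_\lambda is harmonic on S, satisfies 0 < g_\lambda < 1, and for any fixed x with |x| < \pi/2 and y < \lambda + 2, g_\lambda(x+iy) = (1/\pi) arctan(cos x / sinh(\lambda + 2 - y)). -/

import Mathlib

/-
Up to the affine change `1/2 - (1/π) · _`, `g_λ` is the argument of a conformal map of the strip
onto the right half-plane: `ξ = exp (i z + c)` (with `c = λ + 2`) maps the strip onto `Re ξ > 0`,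
and the Möbius automorphism `ξ ↦ (1 + i ξ) / (ξ + i)` of the right half-plane turns it into a
positive multiple of `cos x + i sinh (c - y)`, whose argument is `arctan (sinh (c - y) / cos x)`.
As the imaginary part of a holomorphic logarithm, this is harmonic; the bounds and the formula for
`y < c` are properties of `arctan` alone.
-/

open Real Set Complex

/-- `u` is harmonic on `s ⊆ ℂ`: it is `C²` there and its Laplacian vanishes. -/
def HarmonicOnSet (u : ℂ → ℝ) (s : Set ℂ) : Prop :=
  ContDiffOn ℝ 2 u s ∧ ∀ z ∈ s,
    iteratedFDeriv ℝ 2 u z ![1, 1] + iteratedFDeriv ℝ 2 u z ![Complex.I, Complex.I] = 0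

open InnerProductSpace

theorem InnerProductSpace.HarmonicOnNhd.harmonicOnSet {u : ℂ → ℝ} {s : Set ℂ}
    (hu : HarmonicOnNhd u s) : HarmonicOnSet u s := by
  refine ⟨hu.contDiffOn, fun z hz => ?_⟩
  rw [← congrFun (laplacian_eq_iteratedFDeriv_complexPlane u) z]
  exact (hu z hz).2.eq_of_nhds

theorem Complex.arg_eq_arctan_of_re_pos {w : ℂ} (hw : 0 < w.re) :
    arg w = Real.arctan (w.im / w.re) := by
  rw [← Complex.tan_arg, Real.arctan_tan] <;>
    linarith [abs_lt.1 (abs_arg_lt_pi_div_two_iff.2 (Or.inl hw))]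

theorem Real.cos_pos_of_abs_lt_pi_div_two {x : ℝ} (hx : |x| < π / 2) : 0 < Real.cos x :=
  Real.cos_pos_of_mem_Ioo (abs_lt.1 hx)

lemma one_half_sub_inv_pi_mul_arctan_mem_Ioo (x : ℝ) :
    1 / 2 - (1 / π) * Real.arctan x ∈ Ioo 0 1 := by
  have hlt : (1 / π) * Real.arctan x < 1 / 2 := by
    rw [one_div_mul_eq_div, div_lt_iff₀ Real.pi_pos]
    linarith [Real.arctan_lt_pi_div_two x]
  have hgt : -(1 / 2) < (1 / π) * Real.arctan x := by
    rw [one_div_mul_eq_div, lt_div_iff₀ Real.pi_pos]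
    linarith [Real.neg_pi_div_two_lt_arctan x]
  constructor <;> linarith

lemma one_half_sub_inv_pi_mul_arctan_of_pos {x : ℝ} (hx : 0 < x) :
    1 / 2 - (1 / π) * Real.arctan x = (1 / π) * Real.arctan x⁻¹ := by
  rw [Real.arctan_inv_of_pos hx]
  field_simp

lemma exp_I_mul_add_ofReal_eq (c : ℝ) (z : ℂ) :
    Complex.exp (I * z + c) =
      ⟨Real.exp (c - z.im) * Real.cos z.re, Real.exp (c - z.im) * Real.sin z.re⟩ := by
  apply Complex.ext <;> simp [Complex.exp_re, Complex.exp_im, sub_eq_neg_add]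

noncomputable def stripToRightHalfPlane (c : ℝ) (z : ℂ) : ℂ :=
  (1 + I * Complex.exp (I * z + c)) / (Complex.exp (I * z + c) + I)

section stripToRightHalfPlane

variable (c : ℝ) {z : ℂ}

lemma re_exp_I_mul_add_add_I_pos (hz : 0 < Real.cos z.re) :
    0 < (Complex.exp (I * z + c) + I).re := by
  rw [exp_I_mul_add_ofReal_eq]
  simpa using mul_pos (Real.exp_pos _) hz

lemma stripToRightHalfPlane_eq_ofReal_mul (hz : 0 < Real.cos z.re) :
    ∃ r : ℝ, 0 < r ∧
      stripToRightHalfPlane c z = r * ⟨Real.cos z.re, Real.sinh (c - z.im)⟩ := by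
  have hne := ne_zero_of_re_pos (re_exp_I_mul_add_add_I_pos c hz)
  -- `(1 + i ξ) * conj (ξ + i) = 2 eᵗ (cos x + i sinh t)` with `t = c - y`
  refine ⟨2 * Real.exp (c - z.im) / normSq (Complex.exp (I * z + c) + I),
    div_pos (by positivity) (normSq_pos.2 hne), ?_⟩
  rw [stripToRightHalfPlane, div_eq_iff hne, exp_I_mul_add_ofReal_eq]
  simp only [normSq_apply, Complex.ext_iff, mul_re, mul_im, add_re, add_im, ofReal_re, ofReal_im,
    one_re, one_im, I_re, I_im, Real.sinh_eq, Real.exp_neg, zero_mul, add_zero, zero_add,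
    sub_zero, zero_sub]
  have hsc := Real.sin_sq_add_cos_sq z.re
  have hE := Real.exp_pos (c - z.im)
  generalize Real.exp (c - z.im) = E, Real.sin z.re = s, Real.cos z.re = k at hz hsc hE ⊢
  have hD : E ^ 2 * k ^ 2 + (E * s + 1) ^ 2 ≠ 0 := by positivity
  constructor <;> field_simp
  · linear_combination (-E ^ 2 - E ^ 3 * s) * hsc
  · linear_combination E ^ 2 * hsc

lemma re_stripToRightHalfPlane_pos (hz : 0 < Real.cos z.re) :
    0 < (stripToRightHalfPlane c z).re := by
  obtain ⟨r, hr, h⟩ := stripToRightHalfPlane_eq_ofReal_mul c hz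
  rw [h, re_ofReal_mul]
  exact mul_pos hr hz

lemma arg_stripToRightHalfPlane (hz : 0 < Real.cos z.re) :
    arg (stripToRightHalfPlane c z) = Real.arctan (Real.sinh (c - z.im) / Real.cos z.re) := by
  obtain ⟨r, hr, h⟩ := stripToRightHalfPlane_eq_ofReal_mul c hz
  rw [h, arg_real_mul _ hr,
    arg_eq_arctan_of_re_pos (w := ⟨Real.cos z.re, Real.sinh (c - z.im)⟩) hz]

lemma analyticAt_stripToRightHalfPlane (hz : 0 < Real.cos z.re) :
    AnalyticAt ℂ (stripToRightHalfPlane c) z := by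
  have hne := ne_zero_of_re_pos (re_exp_I_mul_add_add_I_pos c hz)
  unfold stripToRightHalfPlane
  fun_prop (disch := exact hne)

end stripToRightHalfPlane

lemma harmonicOnNhd_arctan_sinh_div_cos (c : ℝ) :
    HarmonicOnNhd (fun w : ℂ => Real.arctan (Real.sinh (c - w.im) / Real.cos w.re))
      {w : ℂ | |w.re| < π / 2} := by
  have hstrip : IsOpen {w : ℂ | |w.re| < π / 2} :=
    isOpen_lt (continuous_abs.comp continuous_re) continuous_const
  intro z hz
  have hcos := Real.cos_pos_of_abs_lt_pi_div_two hz
  rw [harmonicAt_congr_nhds (f₂ := fun w => (Complex.log (stripToRightHalfPlane c w)).im)]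
  · exact ((analyticAt_stripToRightHalfPlane c hcos).clog
      (mem_slitPlane_iff.2 (Or.inl (re_stripToRightHalfPlane_pos c hcos)))).harmonicAt_im
  · filter_upwards [hstrip.mem_nhds hz] with w hw
    rw [log_im, arg_stripToRightHalfPlane c (Real.cos_pos_of_abs_lt_pi_div_two hw)]

theorem strip_harmonic_function_general (lam : ℝ) :
    HarmonicOnSet
        (fun z => 1 / 2 - (1 / π) * Real.arctan (Real.sinh (lam + 2 - z.im) / Real.cos z.re))
        {z : ℂ | |z.re| < π / 2} ∧
      (∀ z : ℂ, |z.re| < π / 2 →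
        0 < 1 / 2 - (1 / π) * Real.arctan (Real.sinh (lam + 2 - z.im) / Real.cos z.re) ∧
        1 / 2 - (1 / π) * Real.arctan (Real.sinh (lam + 2 - z.im) / Real.cos z.re) < 1) ∧
      ∀ x y : ℝ, |x| < π / 2 → y < lam + 2 →
        1 / 2 - (1 / π) * Real.arctan (Real.sinh (lam + 2 - y) / Real.cos x) =
          (1 / π) * Real.arctan (Real.cos x / Real.sinh (lam + 2 - y)) := by
  refine ⟨?_, fun z _ => one_half_sub_inv_pi_mul_arctan_mem_Ioo _, fun x y hx hy => ?_⟩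
  · exact ((harmonicOnNhd_const _).sub
      ((harmonicOnNhd_arctan_sinh_div_cos (lam + 2)).const_smul)).harmonicOnSet
  · have hsinh : 0 < Real.sinh (lam + 2 - y) := Real.sinh_pos_iff.2 (by linarith)
    rw [← inv_div (Real.sinh _)]
    exact one_half_sub_inv_pi_mul_arctan_of_pos
      (div_pos hsinh (Real.cos_pos_of_abs_lt_pi_div_two hx))

/-- On the strip `S = {|Re z| < π/2}`, the function
`g_λ(x+iy) = 1/2 - (1/π) arctan(sinh(λ+2-y)/cos x)` is harmonic, takes values in `(0,1)`,
and for `y < λ + 2` equals `(1/π) arctan(cos x / sinh(λ+2-y))`. -/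
theorem strip_harmonic_function (lam : ℝ) (hlam : 0 ≤ lam) :
    HarmonicOnSet
        (fun z => 1 / 2 - (1 / π) * Real.arctan (Real.sinh (lam + 2 - z.im) / Real.cos z.re))
        {z : ℂ | |z.re| < π / 2} ∧
      (∀ z : ℂ, |z.re| < π / 2 →
        0 < 1 / 2 - (1 / π) * Real.arctan (Real.sinh (lam + 2 - z.im) / Real.cos z.re) ∧
        1 / 2 - (1 / π) * Real.arctan (Real.sinh (lam + 2 - z.im) / Real.cos z.re) < 1) ∧
      ∀ x y : ℝ, |x| < π / 2 → y < lam + 2 →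
        1 / 2 - (1 / π) * Real.arctan (Real.sinh (lam + 2 - y) / Real.cos x) =
          (1 / π) * Real.arctan (Real.cos x / Real.sinh (lam + 2 - y)) :=
  strip_harmonic_function_general lam
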